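/- arXiv:2005.00511 — 3 statements merged into one kernel-verified Lean document; each statement's English description precedes it below -/
import Mathlib

section
/- (Delocalization after randomized Hadamard transform.) For every D > 0 there exists a constant C > 0 such that for all n ≥ 2 and every unit vector w ∈ ℝ^n, P( ‖n^{−1/2}·H D w‖_∞ > C·(log n)/√n ) ≤ n^{−D}. -/
/-!
Row `i` of `H D w` is the Rademacher sum `∑ l, H i l * w l * a l`. Since `H i l = ±1`, its
coefficient vector has squared norm `w ⬝ᵥ w = 1`, so by `cosh t ≤ exp (t ^ 2 / 2)` and
independence it is `1`-sub-Gaussian and exceeds `ε` in absolute value with probability at most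
`2 exp (-ε ^ 2 / 2)`. A union bound over the `n` rows with `ε = C log n`, where
`C ^ 2 log 2 = 2 (D + 2)`, bounds the total probability by `2 n · n ^ (-(D + 2)) ≤ n ^ (-D)`.
-/

open MeasureTheory ProbabilityTheory Matrix Real
open scoped NNReal

noncomputable def rademacher : Measure ℝ :=
  (1 / 2 : ENNReal) • Measure.dirac 1 + (1 / 2 : ENNReal) • Measure.dirac (-1)

lemma integrable_rademacher (f : ℝ → ℝ) : Integrable f rademacher :=
  ((integrable_dirac enorm_lt_top).smul_measure (by simp)).add_measure
    ((integrable_dirac enorm_lt_top).smul_measure (by simp))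

lemma integral_rademacher (f : ℝ → ℝ) : ∫ x, f x ∂rademacher = (f 1 + f (-1)) / 2 := by
  rw [rademacher, integral_add_measure, integral_smul_measure, integral_smul_measure,
    integral_dirac, integral_dirac]
  · simp only [one_div, ENNReal.toReal_inv, ENNReal.toReal_ofNat, smul_eq_mul]; ring
  all_goals exact (integrable_dirac enorm_lt_top).smul_measure (by simp)

lemma hasSubgaussianMGF_id_rademacher : HasSubgaussianMGF id 1 rademacher where
  integrable_exp_mul _ := integrable_rademacher _
  mgf_le t := by
    rw [mgf, integral_rademacher]
    simpa [cosh_eq, mul_comm] using cosh_le_exp_half_sq t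

section

variable {Ω ι : Type*} [MeasurableSpace Ω] {μ : Measure Ω}

lemma ProbabilityTheory.HasSubgaussianMGF.measure_abs_ge_le {X : Ω → ℝ} {c : ℝ≥0}
    (h : HasSubgaussianMGF X c μ) {ε : ℝ} (hε : 0 ≤ ε) :
    μ.real {ω | ε ≤ |X ω|} ≤ 2 * exp (-ε ^ 2 / (2 * c)) := by
  have hsplit : {ω | ε ≤ |X ω|} = {ω | ε ≤ X ω} ∪ {ω | ε ≤ (-X) ω} := by
    ext ω; simp [le_abs]
  calc μ.real {ω | ε ≤ |X ω|} ≤ μ.real {ω | ε ≤ X ω} + μ.real {ω | ε ≤ (-X) ω} :=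
        hsplit ▸ measureReal_union_le _ _
    _ ≤ exp (-ε ^ 2 / (2 * c)) + exp (-ε ^ 2 / (2 * c)) :=
        add_le_add (h.measure_ge_le hε) (h.neg.measure_ge_le hε)
    _ = 2 * exp (-ε ^ 2 / (2 * c)) := (two_mul _).symm

lemma hasSubgaussianMGF_sum_mul_of_map_eq_rademacher [Fintype ι] {a : Ω → ι → ℝ}
    (ha : ∀ l, AEMeasurable (fun ω ↦ a ω l) μ) (hind : iIndepFun (fun l ω ↦ a ω l) μ)
    (hdist : ∀ l, μ.map (fun ω ↦ a ω l) = rademacher) (c : ι → ℝ) :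
    HasSubgaussianMGF (fun ω ↦ ∑ l, c l * a ω l) (∑ l, c l ^ 2).toNNReal μ := by
  have hterm (l : ι) : HasSubgaussianMGF (fun ω ↦ c l * a ω l) (c l ^ 2).toNNReal μ := by
    have hl : HasSubgaussianMGF (fun ω ↦ a ω l) 1 μ := by
      rw [← HasSubgaussianMGF.id_map_iff (ha l), hdist l]
      exact hasSubgaussianMGF_id_rademacher
    convert hl.const_mul (c l) using 2
    ext
    exact (max_eq_left (sq_nonneg _)).trans (mul_one _).symm
  rw [Real.toNNReal_sum_of_nonneg fun l _ ↦ sq_nonneg (c l)]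
  exact HasSubgaussianMGF.sum_of_iIndepFun (hind.comp _ fun l ↦ measurable_const_mul (c l))
    fun l _ ↦ hterm l

end

lemma setOf_lt_iSup_subset {α Ω ι : Type*} [ConditionallyCompleteLinearOrder α] [Nonempty ι]
    (f : ι → Ω → α) (t : α) : {ω | t < ⨆ i, f i ω} ⊆ ⋃ i, {ω | t < f i ω} := fun _ hω ↦
  Set.mem_iUnion.mpr (exists_lt_of_lt_ciSup hω)

lemma mul_diagonal_mulVec_apply {m n R : Type*} [Fintype n] [DecidableEq n] [CommSemiring R]
    (A : Matrix m n R) (d w : n → R) (i : m) :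
    ((A * diagonal d) *ᵥ w) i = ∑ l, A i l * w l * d l := by
  simp only [mulVec, dotProduct, mul_diagonal]
  exact Finset.sum_congr rfl fun l _ ↦ by ring

lemma sum_mul_sq_eq_dotProduct_self {ι : Type*} [Fintype ι] {s : ι → ℝ}
    (hs : ∀ l, s l = 1 ∨ s l = -1) (w : ι → ℝ) : ∑ l, (s l * w l) ^ 2 = w ⬝ᵥ w :=
  Finset.sum_congr rfl fun l _ ↦ by rcases hs l with h | h <;> rw [h] <;> ring

lemma natCast_mul_two_mul_exp_le_rpow_neg {C D : ℝ} (hC : 2 * (D + 2) ≤ C ^ 2 * log 2) {n : ℕ}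
    (hn : 2 ≤ n) : n * (2 * exp (-(C * log n) ^ 2 / 2)) ≤ (n : ℝ) ^ (-D) := by
  have hn2 : (2 : ℝ) ≤ n := by exact_mod_cast hn
  have hn0 : (0 : ℝ) < n := by positivity
  have hlog : log 2 ≤ log n := log_le_log two_pos hn2
  have hlog0 : 0 ≤ log n := (log_pos one_lt_two).le.trans hlog
  have hexp : exp (-(C * log n) ^ 2 / 2) ≤ (n : ℝ) ^ (-D) * (n : ℝ) ^ (-2 : ℝ) := by
    rw [← rpow_add hn0, rpow_def_of_pos hn0, exp_le_exp]
    nlinarith [mul_le_mul_of_nonneg_left hlog (sq_nonneg C), mul_nonneg hlog0 hlog0]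
  calc (n : ℝ) * (2 * exp (-(C * log n) ^ 2 / 2))
      ≤ n * (2 * ((n : ℝ) ^ (-D) * (n : ℝ) ^ (-2 : ℝ))) := by gcongr
    _ = 2 / n * (n : ℝ) ^ (-D) := by
        rw [rpow_neg hn0.le 2, Real.rpow_two]; field_simp
    _ ≤ (n : ℝ) ^ (-D) := by
        apply mul_le_of_le_one_left (by positivity)
        rwa [div_le_one hn0]

/-- **Delocalization after a randomized Hadamard transform.** For every `D > 0` there is
`C > 0` such that for all `n ≥ 2`, any `n × n` Hadamard matrix `H` (entries `±1`,
`H Hᵀ = n I`), i.i.d. Rademacher signs `a`, and any unit vector `w ∈ ℝⁿ`,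
`P(‖n^{-1/2} H D w‖_∞ > C log n / √n) ≤ n^{-D}`. -/
theorem hadamard_delocalization :
    ∀ D : ℝ, 0 < D → ∃ C : ℝ, 0 < C ∧
      ∀ n : ℕ, 2 ≤ n →
      ∀ H : Matrix (Fin n) (Fin n) ℝ,
        (∀ i j, H i j = 1 ∨ H i j = -1) →
        H * Hᵀ = (n : ℝ) • 1 →
      ∀ (Ω : Type) [MeasurableSpace Ω] (P : Measure Ω), IsProbabilityMeasure P →
      ∀ a : Ω → Fin n → ℝ,
        Measurable a →
        iIndepFun (fun (l : Fin n) => fun ω => a ω l) P →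
        (∀ l : Fin n,
          Measure.map (fun ω => a ω l) P =
            (1 / 2 : ENNReal) • Measure.dirac (1 : ℝ) +
              (1 / 2 : ENNReal) • Measure.dirac (-1 : ℝ)) →
      ∀ w : Fin n → ℝ, w ⬝ᵥ w = 1 →
        P {ω | C * Real.log n / Real.sqrt n <
            ⨆ i : Fin n,
              |(Real.sqrt n)⁻¹ * (H * Matrix.diagonal (a ω)).mulVec w i|} ≤
          ENNReal.ofReal ((n : ℝ) ^ (-D)) := by
  intro D hD
  set C := √(2 * (D + 2) / log 2)
  have hC : 2 * (D + 2) ≤ C ^ 2 * log 2 := by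
    rw [sq_sqrt (by positivity), div_mul_cancel₀ _ (log_pos one_lt_two).ne']
  refine ⟨C, by positivity, fun n hn H hH _ Ω _ P _ a ha hind hdist w hw ↦ ?_⟩
  have : Nonempty (Fin n) := ⟨⟨0, by omega⟩⟩
  have hε : 0 ≤ C * log n := by positivity
  have hsqrt : 0 < √(n : ℝ) := by positivity
  have hrow (i : Fin n) : P.real {ω | C * log n ≤ |∑ l, H i l * w l * a ω l|} ≤
      2 * exp (-(C * log n) ^ 2 / 2) := by
    have := (hasSubgaussianMGF_sum_mul_of_map_eq_rademacher (fun l ↦ ha.eval.aemeasurable) hind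
      hdist (fun l ↦ H i l * w l)).measure_abs_ge_le hε
    simpa [sum_mul_sq_eq_dotProduct_self (hH i), hw] using this
  have hev : {ω | C * log n / √n < ⨆ i, |(√n)⁻¹ * ((H * diagonal (a ω)) *ᵥ w) i|} ⊆
      ⋃ i, {ω | C * log n ≤ |∑ l, H i l * w l * a ω l|} := by
    refine (setOf_lt_iSup_subset _ _).trans (Set.iUnion_mono fun i ω hω ↦ ?_)
    rw [Set.mem_ofPred_eq, mul_diagonal_mulVec_apply, abs_mul, abs_inv, abs_of_pos hsqrt,
      inv_mul_eq_div, div_lt_div_iff_of_pos_right hsqrt] at hω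
    exact hω.le
  rw [← ofReal_measureReal]
  refine ENNReal.ofReal_le_ofReal ?_
  calc _ ≤ P.real (⋃ i, {ω | C * log n ≤ |∑ l, H i l * w l * a ω l|}) := measureReal_mono hev
    _ ≤ ∑ i, P.real {ω | C * log n ≤ |∑ l, H i l * w l * a ω l|} :=
        measureReal_iUnion_fintype_le _
    _ ≤ ∑ _i : Fin n, 2 * exp (-(C * log n) ^ 2 / 2) := Finset.sum_le_sum fun i _ ↦ hrow i
    _ = n * (2 * exp (-(C * log n) ^ 2 / 2)) := by simp
    _ ≤ (n : ℝ) ^ (-D) := natCast_mul_two_mul_exp_le_rpow_neg hC hn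
end

section
/- (Explicit solution and inverse of the self-consistent equation for orthogonal sketching.) Fix γ > 0 and ξ ∈ (0,1) and set λ_± := (√γ ± √ξ)². Then: (a) for every z ∈ ℂ with Im z > 0, the quadratic z·m² + (z − γ + ξ)·m + ξ = 0 has exactly one root m with Im m ≥ 0, and this root has Im m > 0; (b) the map m_{2c}(x) := (−(x − γ + ξ) + √((x − λ_+)(x − λ_−)))/(2x) (with the nonnegative real square root) is a strictly increasing bijection from (λ_+, ∞) onto (−√ξ/(√γ + √ξ), 0), it satisfies x·m_{2c}(x)² + (x − γ + ξ)·m_{2c}(x) + ξ = 0 for all x > λ_+, its inverse is g_{2c}(m) := γ/(1 + m) − ξ/m, and lim_{x→λ_+⁺} m_{2c}(x) = −√ξ/(√γ + √ξ). -/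
/-!
A root `m ∉ {0, -1}` of `z m² + (z - γ + ξ) m + ξ` is exactly a solution of
`z = g₂c(m) = γ/(1+m) - ξ/m`, and taking imaginary parts gives
`Im z = Im m · (ξ/|m|² - γ/|1+m|²)`, so no root is real when `Im z > 0`. By Vieta the two
roots satisfy `z m m' = ξ` and `z (1+m)(1+m') = γ`, so `(ξ/|m|²)(ξ/|m'|²)` and
`(γ/|1+m|²)(γ/|1+m'|²)` both equal `|z|²`: the two brackets have opposite signs, and exactly
one root lies in the upper half-plane.

For real `x > λ₊`, `m₂c(x)` is the larger root of the same quadratic. The quadratic takes the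
value `-√γ√ξ (x - λ₊)/(√γ+√ξ)²` at `-√ξ/(√γ+√ξ)`, which puts `m₂c(x)` in the interval
`(-√ξ/(√γ+√ξ), 0)`. On that interval `g₂c` is strictly increasing and
`g₂c(m) - λ₊ = (√ξ + (√γ+√ξ) m)²/(-m(1+m)) > 0`, so `g₂c` and `m₂c` are mutually inverse.
-/

open Filter Set Topology

def g2c {K : Type*} [Field K] (γ ξ m : K) : K := γ / (1 + m) - ξ / m

section SelfConsistentQuadratic

variable {K : Type*} [Field K] {γ ξ z m m' : K}

lemma ne_zero_of_selfConsistent (hξ : ξ ≠ 0) (h : z * m ^ 2 + (z - γ + ξ) * m + ξ = 0) :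
    m ≠ 0 := by
  rintro rfl
  exact hξ (by linear_combination h)

lemma one_add_ne_zero_of_selfConsistent (hγ : γ ≠ 0)
    (h : z * m ^ 2 + (z - γ + ξ) * m + ξ = 0) : 1 + m ≠ 0 := by
  intro hm
  obtain rfl : m = -1 := by linear_combination hm
  exact hγ (by linear_combination h)

lemma selfConsistent_iff_eq_g2c (hm : m ≠ 0) (hm1 : 1 + m ≠ 0) :
    z * m ^ 2 + (z - γ + ξ) * m + ξ = 0 ↔ z = g2c γ ξ m := by
  have key : z - g2c γ ξ m = (z * m ^ 2 + (z - γ + ξ) * m + ξ) / (m * (1 + m)) := by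
    rw [g2c]; field_simp; ring
  rw [← sub_eq_zero (a := z), key, div_eq_zero_iff, or_iff_left (mul_ne_zero hm hm1)]

lemma selfConsistent_of_vieta (hP : z * (m * m') = ξ) (hQ : z * ((1 + m) * (1 + m')) = γ) :
    z * m ^ 2 + (z - γ + ξ) * m + ξ = 0 := by
  linear_combination (-(m + 1)) * hP + m * hQ

lemma selfConsistent_of_vieta_right (hP : z * (m * m') = ξ)
    (hQ : z * ((1 + m) * (1 + m')) = γ) : z * m' ^ 2 + (z - γ + ξ) * m' + ξ = 0 := by
  linear_combination (-(m' + 1)) * hP + m' * hQ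

lemma vieta_of_selfConsistent (h : z * m ^ 2 + (z - γ + ξ) * m + ξ = 0)
    (h' : z * m' ^ 2 + (z - γ + ξ) * m' + ξ = 0) (hne : m ≠ m') :
    z * (m * m') = ξ ∧ z * ((1 + m) * (1 + m')) = γ := by
  have hsum : z * (m + m') + (z - γ + ξ) = 0 := by
    refine (mul_eq_zero.1 ?_).resolve_left (sub_ne_zero.2 hne)
    linear_combination h - h'
  constructor
  · linear_combination m * hsum - h
  · linear_combination (m + 1) * hsum - h

end SelfConsistentQuadratic

lemma sub_mul_sub_nonpos_of_mul_eq {a b a' b' : ℝ} (ha : 0 < a) (hb' : 0 ≤ b')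
    (h : a * a' = b * b') : (a - b) * (a' - b') ≤ 0 := by
  have key : a * ((a - b) * (a' - b')) = -(b' * (a - b) ^ 2) := by
    linear_combination (a - b) * h
  exact nonpos_of_mul_nonpos_right (key ▸ neg_nonpos.2 (by positivity)) ha

lemma exists_vieta_of_ne_zero (γ ξ : ℂ) {z : ℂ} (hz : z ≠ 0) (hξ : ξ ≠ 0) :
    ∃ m m' : ℂ, z * (m * m') = ξ ∧ z * ((1 + m) * (1 + m')) = γ := by
  obtain ⟨w, hw⟩ := IsAlgClosed.exists_pow_nat_eq (discrim z (z - γ + ξ) ξ) two_pos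
  obtain ⟨m, hm⟩ := exists_quadratic_eq_zero hz ⟨w, by rw [← hw, sq]⟩
  have hm0 : m ≠ 0 := ne_zero_of_selfConsistent (γ := γ) (z := z) hξ (by linear_combination hm)
  refine ⟨m, ξ / (z * m), by field_simp, ?_⟩
  have key :
      z * ((1 + m) * (1 + ξ / (z * m))) - γ = (z * (m * m) + (z - γ + ξ) * m + ξ) / m := by
    field_simp; ring
  rw [← sub_eq_zero, key, hm, zero_div]

section UpperHalfPlane

open Complex

variable {γ ξ : ℝ} {z m m' : ℂ}

lemma im_g2c :
    (g2c (γ : ℂ) ξ m).im = m.im * (ξ / normSq m - γ / normSq (1 + m)) := by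
  simp only [g2c, div_eq_mul_inv, sub_im, mul_im, ofReal_re, ofReal_im, zero_mul, add_zero,
    inv_im, add_im, one_im, zero_add]
  ring

lemma im_eq_of_selfConsistent (hγ : γ ≠ 0) (hξ : ξ ≠ 0)
    (h : z * m ^ 2 + (z - γ + ξ) * m + ξ = 0) :
    z.im = m.im * (ξ / normSq m - γ / normSq (1 + m)) := by
  rw [(selfConsistent_iff_eq_g2c (ne_zero_of_selfConsistent (by exact_mod_cast hξ) h)
    (one_add_ne_zero_of_selfConsistent (by exact_mod_cast hγ) h)).1 h, im_g2c]

lemma im_mul_im_neg_of_vieta (hγ : 0 < γ) (hξ : 0 < ξ) (hz : 0 < z.im)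
    (hP : z * (m * m') = ξ) (hQ : z * ((1 + m) * (1 + m')) = γ) : m.im * m'.im < 0 := by
  have h := selfConsistent_of_vieta hP hQ
  have h' := selfConsistent_of_vieta_right hP hQ
  have hm := normSq_pos.2 (ne_zero_of_selfConsistent (by exact_mod_cast hξ.ne') h)
  have hm' := normSq_pos.2 (ne_zero_of_selfConsistent (by exact_mod_cast hξ.ne') h')
  have hm1 := normSq_pos.2 (one_add_ne_zero_of_selfConsistent (by exact_mod_cast hγ.ne') h)
  have hm1' := normSq_pos.2 (one_add_ne_zero_of_selfConsistent (by exact_mod_cast hγ.ne') h')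
  have hnP : normSq z * (normSq m * normSq m') = ξ ^ 2 := by
    simpa only [map_mul, normSq_ofReal, sq] using congrArg normSq hP
  have hnQ : normSq z * (normSq (1 + m) * normSq (1 + m')) = γ ^ 2 := by
    simpa only [map_mul, normSq_ofReal, sq] using congrArg normSq hQ
  have hsign : (ξ / normSq m - γ / normSq (1 + m)) * (ξ / normSq m' - γ / normSq (1 + m'))
      ≤ 0 := by
    apply sub_mul_sub_nonpos_of_mul_eq (by positivity) (by positivity)
    rw [div_mul_div_comm, div_mul_div_comm, div_eq_div_iff (by positivity) (by positivity)]
    linear_combination (-(normSq (1 + m) * normSq (1 + m'))) * hnP +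
      normSq m * normSq m' * hnQ
  have hsq : z.im * z.im = m.im * m'.im *
      ((ξ / normSq m - γ / normSq (1 + m)) * (ξ / normSq m' - γ / normSq (1 + m'))) := by
    nth_rw 1 [im_eq_of_selfConsistent hγ.ne' hξ.ne' h, im_eq_of_selfConsistent hγ.ne' hξ.ne' h']
    ring
  nlinarith [mul_pos hz hz]

lemma im_pos_of_selfConsistent (hγ : 0 < γ) (hξ : 0 < ξ) (hz : 0 < z.im)
    (h : z * m ^ 2 + (z - γ + ξ) * m + ξ = 0) (him : 0 ≤ m.im) : 0 < m.im := by
  refine him.lt_of_ne fun h0 => hz.ne ?_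
  rw [im_eq_of_selfConsistent hγ.ne' hξ.ne' h, ← h0, zero_mul]

theorem existsUnique_selfConsistent_im_nonneg (hγ : 0 < γ) (hξ : 0 < ξ) (hz : 0 < z.im) :
    ∃! m : ℂ, z * m ^ 2 + (z - γ + ξ) * m + ξ = 0 ∧ 0 ≤ m.im := by
  have hz0 : z ≠ 0 := by rintro rfl; simp at hz
  obtain ⟨m, m', hP, hQ⟩ := exists_vieta_of_ne_zero γ ξ hz0 (by exact_mod_cast hξ.ne')
  have hneg := im_mul_im_neg_of_vieta hγ hξ hz hP hQ
  have exists_root : ∃ m : ℂ, z * m ^ 2 + (z - γ + ξ) * m + ξ = 0 ∧ 0 < m.im := by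
    rcases lt_or_ge 0 m.im with him | him
    · exact ⟨m, selfConsistent_of_vieta hP hQ, him⟩
    · exact ⟨m', selfConsistent_of_vieta_right hP hQ, by nlinarith⟩
  obtain ⟨m₀, h₀, him₀⟩ := exists_root
  refine ⟨m₀, ⟨h₀, him₀.le⟩, fun m₁ ⟨h₁, him₁⟩ => ?_⟩
  by_contra hne
  obtain ⟨hP₁, hQ₁⟩ := vieta_of_selfConsistent h₁ h₀ hne
  have := im_mul_im_neg_of_vieta hγ hξ hz hP₁ hQ₁
  nlinarith [im_pos_of_selfConsistent hγ hξ hz h₁ him₁]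

end UpperHalfPlane

lemma StrictMonoOn.of_leftInvOn {α β : Type*} [Preorder α] [LinearOrder β] {f : α → β}
    {g : β → α} {s : Set α} {t : Set β} (hg : StrictMonoOn g t) (hf : MapsTo f s t)
    (hgf : LeftInvOn g f s) : StrictMonoOn f s := by
  intro x hx y hy hxy
  by_contra! h
  have := hg.monotoneOn (hf hy) (hf hx) h
  rw [hgf hx, hgf hy] at this
  exact hxy.not_ge this

noncomputable def quadraticRoot (a b c : ℝ) : ℝ := (-b + √(discrim a b c)) / (2 * a)

section QuadraticRoot

variable {a b c : ℝ}

lemma quadraticRoot_eq_zero (ha : a ≠ 0) (hD : 0 ≤ discrim a b c) :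
    a * quadraticRoot a b c ^ 2 + b * quadraticRoot a b c + c = 0 := by
  rw [sq, quadratic_eq_zero_iff ha (Real.mul_self_sqrt hD).symm]
  exact Or.inl rfl

lemma lt_quadraticRoot {t : ℝ} (ha : 0 < a) (ht : a * t ^ 2 + b * t + c < 0) :
    t < quadraticRoot a b c := by
  have hD : (2 * a * t + b) ^ 2 < discrim a b c := by rw [discrim]; nlinarith
  rw [quadraticRoot, lt_div_iff₀ (by positivity)]
  linarith [Real.lt_sqrt_of_sq_lt hD]

lemma quadraticRoot_neg (ha : 0 < a) (hb : 0 < b) (hc : 0 < c) : quadraticRoot a b c < 0 := by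
  have hD : √(discrim a b c) < b := by
    rw [Real.sqrt_lt' hb, discrim]; nlinarith
  exact div_neg_of_neg_of_pos (by linarith) (by positivity)

end QuadraticRoot

noncomputable def m2c (γ ξ x : ℝ) : ℝ := quadraticRoot x (x - γ + ξ) ξ

section EdgeBranch

variable {g s : ℝ}

lemma discrim_m2c (g s x : ℝ) :
    discrim x (x - g ^ 2 + s ^ 2) (s ^ 2) = (x - (g + s) ^ 2) * (x - (g - s) ^ 2) := by
  rw [discrim]; ring

lemma add_mul_pos_of_mem_Ioo (hg : 0 < g) (hs : 0 < s) {m : ℝ}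
    (hm : m ∈ Ioo (-(s / (g + s))) 0) : 0 < s + (g + s) * m := by
  have := hm.1
  rw [neg_lt, lt_div_iff₀ (by positivity)] at this
  linarith

lemma one_add_pos_of_mem_Ioo (hg : 0 < g) (hs : 0 < s) {m : ℝ}
    (hm : m ∈ Ioo (-(s / (g + s))) 0) : 0 < 1 + m := by
  have := add_mul_pos_of_mem_Ioo hg hs hm
  nlinarith [hm.2]

lemma m2c_eq_zero (hg : 0 < g) (hs : 0 < s) {x : ℝ} (hx : (g + s) ^ 2 < x) :
    x * m2c (g ^ 2) (s ^ 2) x ^ 2 + (x - g ^ 2 + s ^ 2) * m2c (g ^ 2) (s ^ 2) x + s ^ 2 = 0 := by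
  refine quadraticRoot_eq_zero (lt_of_le_of_lt (sq_nonneg _) hx).ne' ?_
  rw [discrim_m2c]
  have : (g - s) ^ 2 < (g + s) ^ 2 := by nlinarith [mul_pos hg hs]
  exact mul_nonneg (by linarith) (by linarith)

lemma m2c_mem_Ioo (hg : 0 < g) (hs : 0 < s) {x : ℝ} (hx : (g + s) ^ 2 < x) :
    m2c (g ^ 2) (s ^ 2) x ∈ Ioo (-(s / (g + s))) 0 := by
  have hx0 : 0 < x := lt_of_le_of_lt (sq_nonneg _) hx
  constructor
  · apply lt_quadraticRoot hx0
    have key : x * (-(s / (g + s))) ^ 2 + (x - g ^ 2 + s ^ 2) * -(s / (g + s)) + s ^ 2 =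
        -(g * s * (x - (g + s) ^ 2)) / (g + s) ^ 2 := by
      field_simp; ring
    rw [key]
    exact div_neg_of_neg_of_pos (neg_neg_of_pos (by positivity)) (by positivity)
  · exact quadraticRoot_neg hx0 (by nlinarith [mul_pos hg hs]) (by positivity)

lemma g2c_m2c (hg : 0 < g) (hs : 0 < s) {x : ℝ} (hx : (g + s) ^ 2 < x) :
    g2c (g ^ 2) (s ^ 2) (m2c (g ^ 2) (s ^ 2) x) = x := by
  have hm := m2c_mem_Ioo hg hs hx
  exact ((selfConsistent_iff_eq_g2c hm.2.ne (one_add_pos_of_mem_Ioo hg hs hm).ne').1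
    (m2c_eq_zero hg hs hx)).symm

lemma mapsTo_g2c (hg : 0 < g) (hs : 0 < s) :
    MapsTo (g2c (g ^ 2) (s ^ 2)) (Ioo (-(s / (g + s))) 0) (Ioi ((g + s) ^ 2)) := by
  intro m hm
  have hm1 := one_add_pos_of_mem_Ioo hg hs hm
  have key : g2c (g ^ 2) (s ^ 2) m - (g + s) ^ 2 = (s + (g + s) * m) ^ 2 / (-m * (1 + m)) := by
    rw [g2c]; field_simp [hm.2.ne, hm1.ne']; ring
  have := add_mul_pos_of_mem_Ioo hg hs hm
  have : 0 < -m * (1 + m) := mul_pos (neg_pos.2 hm.2) hm1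
  rw [mem_Ioi, ← sub_pos, key]
  positivity

lemma strictMonoOn_g2c (hg : 0 < g) (hs : 0 < s) :
    StrictMonoOn (g2c (g ^ 2) (s ^ 2)) (Ioo (-(s / (g + s))) 0) := by
  intro m hm m' hm' hlt
  have h1 := one_add_pos_of_mem_Ioo hg hs hm
  have h1' := one_add_pos_of_mem_Ioo hg hs hm'
  have key : g2c (g ^ 2) (s ^ 2) m' - g2c (g ^ 2) (s ^ 2) m =
      (m' - m) * (s ^ 2 / (m * m') - g ^ 2 / ((1 + m) * (1 + m'))) := by
    rw [g2c, g2c]; field_simp [hm.2.ne, hm'.2.ne, h1.ne', h1'.ne']; ring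
  have hprod : g * -m * (g * -m') < s * (1 + m) * (s * (1 + m')) :=
    mul_lt_mul'' (by linarith [add_mul_pos_of_mem_Ioo hg hs hm])
      (by linarith [add_mul_pos_of_mem_Ioo hg hs hm'])
      (mul_pos hg (neg_pos.2 hm.2)).le (mul_pos hg (neg_pos.2 hm'.2)).le
  rw [← sub_pos, key]
  refine mul_pos (sub_pos.2 hlt) (sub_pos.2 ?_)
  rw [div_lt_div_iff₀ (by positivity) (mul_pos_of_neg_of_neg hm.2 hm'.2)]
  linarith

lemma tendsto_m2c (hg : 0 < g) (hs : 0 < s) :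
    Tendsto (m2c (g ^ 2) (s ^ 2)) (𝓝[>] ((g + s) ^ 2)) (𝓝 (-(s / (g + s)))) := by
  have hcont : ContinuousAt (m2c (g ^ 2) (s ^ 2)) ((g + s) ^ 2) := by
    unfold m2c quadraticRoot discrim
    fun_prop (disch := positivity)
  have hval : m2c (g ^ 2) (s ^ 2) ((g + s) ^ 2) = -(s / (g + s)) := by
    rw [m2c, quadraticRoot, discrim_m2c, sub_self, zero_mul, Real.sqrt_zero]
    field_simp; ring
  exact hval ▸ hcont.tendsto.mono_left nhdsWithin_le_nhds

end EdgeBranch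

theorem orthogonal_selfconsistent_equation_solution_general
    (γ ξ : ℝ) (hγ : 0 < γ) (hξ0 : 0 < ξ) :
    -- (a) unique root with nonnegative imaginary part, which is in fact positive
    (∀ z : ℂ, 0 < z.im →
      (∃! m : ℂ, z * m ^ 2 + (z - (γ : ℂ) + (ξ : ℂ)) * m + (ξ : ℂ) = 0 ∧ 0 ≤ m.im) ∧
      (∀ m : ℂ, z * m ^ 2 + (z - (γ : ℂ) + (ξ : ℂ)) * m + (ξ : ℂ) = 0 → 0 ≤ m.im →
        0 < m.im)) ∧
    -- (b) the explicit real branch beyond the right edge and its inverse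
    (StrictMonoOn
        (fun x : ℝ => (-(x - γ + ξ) +
          Real.sqrt ((x - (Real.sqrt γ + Real.sqrt ξ) ^ 2) *
            (x - (Real.sqrt γ - Real.sqrt ξ) ^ 2))) / (2 * x))
        (Set.Ioi ((Real.sqrt γ + Real.sqrt ξ) ^ 2)) ∧
      Set.BijOn
        (fun x : ℝ => (-(x - γ + ξ) +
          Real.sqrt ((x - (Real.sqrt γ + Real.sqrt ξ) ^ 2) *
            (x - (Real.sqrt γ - Real.sqrt ξ) ^ 2))) / (2 * x))
        (Set.Ioi ((Real.sqrt γ + Real.sqrt ξ) ^ 2))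
        (Set.Ioo (-(Real.sqrt ξ / (Real.sqrt γ + Real.sqrt ξ))) 0) ∧
      (∀ x ∈ Set.Ioi ((Real.sqrt γ + Real.sqrt ξ) ^ 2),
        x * ((-(x - γ + ξ) +
            Real.sqrt ((x - (Real.sqrt γ + Real.sqrt ξ) ^ 2) *
              (x - (Real.sqrt γ - Real.sqrt ξ) ^ 2))) / (2 * x)) ^ 2 +
          (x - γ + ξ) *
            ((-(x - γ + ξ) +
              Real.sqrt ((x - (Real.sqrt γ + Real.sqrt ξ) ^ 2) *
                (x - (Real.sqrt γ - Real.sqrt ξ) ^ 2))) / (2 * x)) + ξ = 0) ∧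
      Set.InvOn
        (fun m : ℝ => γ / (1 + m) - ξ / m)
        (fun x : ℝ => (-(x - γ + ξ) +
          Real.sqrt ((x - (Real.sqrt γ + Real.sqrt ξ) ^ 2) *
            (x - (Real.sqrt γ - Real.sqrt ξ) ^ 2))) / (2 * x))
        (Set.Ioi ((Real.sqrt γ + Real.sqrt ξ) ^ 2))
        (Set.Ioo (-(Real.sqrt ξ / (Real.sqrt γ + Real.sqrt ξ))) 0) ∧
      Tendsto
        (fun x : ℝ => (-(x - γ + ξ) +
          Real.sqrt ((x - (Real.sqrt γ + Real.sqrt ξ) ^ 2) *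
            (x - (Real.sqrt γ - Real.sqrt ξ) ^ 2))) / (2 * x))
        (nhdsWithin ((Real.sqrt γ + Real.sqrt ξ) ^ 2)
          (Set.Ioi ((Real.sqrt γ + Real.sqrt ξ) ^ 2)))
        (nhds (-(Real.sqrt ξ / (Real.sqrt γ + Real.sqrt ξ))))) := by
  refine ⟨fun z hz => ⟨existsUnique_selfConsistent_im_nonneg hγ hξ0 hz,
    fun m h him => im_pos_of_selfConsistent hγ hξ0 hz h him⟩, ?_⟩
  obtain ⟨g, hg, rfl⟩ : ∃ g, 0 < g ∧ γ = g ^ 2 :=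
    ⟨√γ, Real.sqrt_pos.2 hγ, (Real.sq_sqrt hγ.le).symm⟩
  obtain ⟨s, hs, rfl⟩ : ∃ s, 0 < s ∧ ξ = s ^ 2 :=
    ⟨√ξ, Real.sqrt_pos.2 hξ0, (Real.sq_sqrt hξ0.le).symm⟩
  simp only [Real.sqrt_sq hg.le, Real.sqrt_sq hs.le, ← discrim_m2c]
  have hmaps : MapsTo (m2c (g ^ 2) (s ^ 2)) (Ioi ((g + s) ^ 2)) (Ioo (-(s / (g + s))) 0) :=
    fun x hx => m2c_mem_Ioo hg hs hx
  have hleft : LeftInvOn (g2c (g ^ 2) (s ^ 2)) (m2c (g ^ 2) (s ^ 2)) (Ioi ((g + s) ^ 2)) :=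
    fun x hx => g2c_m2c hg hs hx
  have hinv : InvOn (g2c (g ^ 2) (s ^ 2)) (m2c (g ^ 2) (s ^ 2)) (Ioi ((g + s) ^ 2))
      (Ioo (-(s / (g + s))) 0) :=
    ⟨hleft, (strictMonoOn_g2c hg hs).injOn.rightInvOn_of_leftInvOn hleft
      (mapsTo_g2c hg hs) hmaps⟩
  exact ⟨(strictMonoOn_g2c hg hs).of_leftInvOn hmaps hleft, hinv.bijOn hmaps (mapsTo_g2c hg hs),
    fun x hx => m2c_eq_zero hg hs hx, hinv, tendsto_m2c hg hs⟩

/-- **Explicit solution and inverse of the self-consistent equation for orthogonal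
sketching.** For `γ > 0`, `ξ ∈ (0,1)` and `λ± = (√γ ± √ξ)²`:
(a) for `Im z > 0` the quadratic `z m² + (z − γ + ξ) m + ξ = 0` has exactly one root
with `Im m ≥ 0`, and that root has `Im m > 0`;
(b) `m₂c(x) = (−(x−γ+ξ) + √((x−λ₊)(x−λ₋)))/(2x)` is a strictly increasing bijection
from `(λ₊, ∞)` onto `(−√ξ/(√γ+√ξ), 0)`, solves the quadratic for `x > λ₊`, has inverse
`g₂c(m) = γ/(1+m) − ξ/m`, and tends to `−√ξ/(√γ+√ξ)` as `x → λ₊⁺`. -/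
theorem orthogonal_selfconsistent_equation_solution
    (γ ξ : ℝ) (hγ : 0 < γ) (hξ0 : 0 < ξ) (hξ1 : ξ < 1) :
    -- (a) unique root with nonnegative imaginary part, which is in fact positive
    (∀ z : ℂ, 0 < z.im →
      (∃! m : ℂ, z * m ^ 2 + (z - (γ : ℂ) + (ξ : ℂ)) * m + (ξ : ℂ) = 0 ∧ 0 ≤ m.im) ∧
      (∀ m : ℂ, z * m ^ 2 + (z - (γ : ℂ) + (ξ : ℂ)) * m + (ξ : ℂ) = 0 → 0 ≤ m.im →
        0 < m.im)) ∧
    -- (b) the explicit real branch beyond the right edge and its inverse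
    (StrictMonoOn
        (fun x : ℝ => (-(x - γ + ξ) +
          Real.sqrt ((x - (Real.sqrt γ + Real.sqrt ξ) ^ 2) *
            (x - (Real.sqrt γ - Real.sqrt ξ) ^ 2))) / (2 * x))
        (Set.Ioi ((Real.sqrt γ + Real.sqrt ξ) ^ 2)) ∧
      Set.BijOn
        (fun x : ℝ => (-(x - γ + ξ) +
          Real.sqrt ((x - (Real.sqrt γ + Real.sqrt ξ) ^ 2) *
            (x - (Real.sqrt γ - Real.sqrt ξ) ^ 2))) / (2 * x))
        (Set.Ioi ((Real.sqrt γ + Real.sqrt ξ) ^ 2))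
        (Set.Ioo (-(Real.sqrt ξ / (Real.sqrt γ + Real.sqrt ξ))) 0) ∧
      (∀ x ∈ Set.Ioi ((Real.sqrt γ + Real.sqrt ξ) ^ 2),
        x * ((-(x - γ + ξ) +
            Real.sqrt ((x - (Real.sqrt γ + Real.sqrt ξ) ^ 2) *
              (x - (Real.sqrt γ - Real.sqrt ξ) ^ 2))) / (2 * x)) ^ 2 +
          (x - γ + ξ) *
            ((-(x - γ + ξ) +
              Real.sqrt ((x - (Real.sqrt γ + Real.sqrt ξ) ^ 2) *
                (x - (Real.sqrt γ - Real.sqrt ξ) ^ 2))) / (2 * x)) + ξ = 0) ∧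
      Set.InvOn
        (fun m : ℝ => γ / (1 + m) - ξ / m)
        (fun x : ℝ => (-(x - γ + ξ) +
          Real.sqrt ((x - (Real.sqrt γ + Real.sqrt ξ) ^ 2) *
            (x - (Real.sqrt γ - Real.sqrt ξ) ^ 2))) / (2 * x))
        (Set.Ioi ((Real.sqrt γ + Real.sqrt ξ) ^ 2))
        (Set.Ioo (-(Real.sqrt ξ / (Real.sqrt γ + Real.sqrt ξ))) 0) ∧
      Tendsto
        (fun x : ℝ => (-(x - γ + ξ) +
          Real.sqrt ((x - (Real.sqrt γ + Real.sqrt ξ) ^ 2) *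
            (x - (Real.sqrt γ - Real.sqrt ξ) ^ 2))) / (2 * x))
        (nhdsWithin ((Real.sqrt γ + Real.sqrt ξ) ^ 2)
          (Set.Ioi ((Real.sqrt γ + Real.sqrt ξ) ^ 2)))
        (nhds (-(Real.sqrt ξ / (Real.sqrt γ + Real.sqrt ξ))))) :=
  orthogonal_selfconsistent_equation_solution_general γ ξ hγ hξ0
end

section
/- (Cubic self-consistent equation for i.i.d. sketching.) Let γ, ξ ∈ ℂ and let z, m, u ∈ ℂ with m ≠ 0. Suppose that u satisfies the Marchenko–Pastur quadratic at the point w = −1/m, i.e. −(ξ/m)·u² + (ξ − 1 − 1/m)·u + 1 = 0, and that z = −γ/m + (ξ/m)·(1 − u/m). Then m satisfies the cubic equation z²·m³ − z·(1 + ξ − 2γ)·m² − (z + (1 − γ)(γ − ξ))·m − γ = 0. -/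
/-! Clearing denominators in the defining relation of `z` gives `ξ u = m (ξ − γ − z m)`.
Multiplying the Marchenko–Pastur quadratic by `ξ m` and substituting this for `ξ u`
turns it into `m` times the cubic, and `m ≠ 0` cancels. -/

section

variable {K : Type*} [Field K] {γ ξ z m u : K}

lemma mul_eq_of_eq_neg_div_add_div_mul_sub (hm : m ≠ 0)
    (hz : z = -γ / m + (ξ / m) * (1 - u / m)) :
    ξ * u = m * (ξ - γ - z * m) := by
  subst hz
  field_simp
  ring

lemma marchenkoPastur_quadratic_mul (hm : m ≠ 0)
    (hquad : -(ξ / m) * u ^ 2 + (ξ - 1 - 1 / m) * u + 1 = 0) :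
    -ξ * u ^ 2 + (ξ * m - m - 1) * u + m = 0 := by
  field_simp at hquad
  linear_combination hquad

end

/-- **Cubic self-consistent equation for i.i.d. sketching.** If `u` satisfies the
Marchenko–Pastur quadratic at `w = −1/m`, i.e. `−(ξ/m) u² + (ξ − 1 − 1/m) u + 1 = 0`,
and `z = −γ/m + (ξ/m)(1 − u/m)`, then `m` satisfies the cubic
`z² m³ − z (1 + ξ − 2γ) m² − (z + (1 − γ)(γ − ξ)) m − γ = 0`. -/
theorem cubic_selfconsistent_equation_iid
    (γ ξ z m u : ℂ) (hm : m ≠ 0)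
    (hquad : -(ξ / m) * u ^ 2 + (ξ - 1 - 1 / m) * u + 1 = 0)
    (hz : z = -γ / m + (ξ / m) * (1 - u / m)) :
    z ^ 2 * m ^ 3 - z * (1 + ξ - 2 * γ) * m ^ 2 -
      (z + (1 - γ) * (γ - ξ)) * m - γ = 0 := by
  have hu := mul_eq_of_eq_neg_div_add_div_mul_sub hm hz
  have hq := marchenkoPastur_quadratic_mul hm hquad
  have hcubic : m * (z ^ 2 * m ^ 3 - z * (1 + ξ - 2 * γ) * m ^ 2 -
      (z + (1 - γ) * (γ - ξ)) * m - γ) = 0 := by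
    linear_combination -ξ * hq + (ξ * m - m - 1 - ξ * u - m * (ξ - γ - z * m)) * hu
  exact (mul_eq_zero.1 hcubic).resolve_left hm
end
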